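/- Fix n ≥ 2 and a finite set M of 2n goods. Consider the interdependent-values instance with n agents and equal entitlements in which S₁ = {0,1}^M, S_i is a singleton for every i ≥ 2, and for every agent i ∈ {1,…,n}, signal vector s, and T ⊆ M, v_i(s,T) = Σ_{j∈T} s_{1,j} (where s_{1,j} ∈ {0,1} is the j-th coordinate of agent 1's signal). Then there is no choice of bid sets B₁,…,Bₙ and allocation mechanism 𝓜 : S × B → allocations satisfying both: (i) for every s ∈ S there exists a pure Nash equilibrium; and (ii) for every s ∈ S, every pure Nash equilibrium induces an allocation (A₁,…,Aₙ) that is EF1 for every agent with respect to s. -/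
import Mathlib


/-- The common additive dichotomous valuation: given agent 1's signal `σ : M → Bool`,
every agent values a bundle `T` at `Σ_{j ∈ T} σ j` (each good is worth `0` or `1`,
according to agent 1's signal only). -/
noncomputable def sval {M : Type*} [Fintype M] (σ : M → Bool) (T : Finset M) : ℝ :=
  ∑ j ∈ T, if σ j then (1 : ℝ) else 0

/-- The bundle of agent `i` in the allocation `A : M → Fin n`. -/
def bundle {M : Type*} [Fintype M] [DecidableEq M] {n : ℕ}
    (A : M → Fin n) (i : Fin n) : Finset M :=
  Finset.univ.filter fun j => A j = i

/-- Pure Nash equilibrium for a mechanism in the instance where agent `i0` (= agent 1)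
has signal set `{0,1}^M` and every other agent's signal set is a singleton (so a
report consists of agent 1's reported signal `r1 : M → Bool` together with the bids
`b i : B i` of all agents).  All agents value bundles by `sval` applied to agent 1's
signal; hence agent `i0`'s perceived signal vector uses her true signal `s1`, while
every other agent's perceived signal vector uses agent 1's report `r1`. -/
def IsPNE {M : Type*} [Fintype M] [DecidableEq M] {n : ℕ} (B : Fin n → Type*)
    (𝓜 : (M → Bool) → (∀ i, B i) → (M → Fin n)) (i0 : Fin n)
    (s1 r1 : M → Bool) (b : ∀ i, B i) : Prop :=
  (∀ (r1' : M → Bool) (b1' : B i0),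
      sval s1 (bundle (𝓜 r1' (Function.update b i0 b1')) i0) ≤
        sval s1 (bundle (𝓜 r1 b) i0)) ∧
  ∀ i : Fin n, i ≠ i0 → ∀ bi' : B i,
      sval r1 (bundle (𝓜 r1 (Function.update b i bi')) i) ≤
        sval r1 (bundle (𝓜 r1 b) i)


lemma sval_all_true {M : Type*} [Fintype M] (σ : M → Bool) (T : Finset M)
    (h : ∀ j ∈ T, σ j = true) : sval σ T = T.card := by
  unfold sval
  rw [Finset.sum_congr rfl (fun j hj => by rw [if_pos (h j hj)])]
  simp

lemma sval_all_false {M : Type*} [Fintype M] (σ : M → Bool) (T : Finset M)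
    (h : ∀ j ∈ T, σ j = false) : sval σ T = 0 := by
  unfold sval
  rw [Finset.sum_congr rfl (fun j hj => by rw [if_neg (by simp [h j hj])])]
  simp

lemma sval_le_card_filter {M : Type*} [Fintype M] (σ : M → Bool) (T : Finset M) :
    sval σ T ≤ ((Finset.univ.filter fun j => σ j = true).card : ℝ) := by
  unfold sval
  calc ∑ j ∈ T, (if σ j then (1:ℝ) else 0)
      ≤ ∑ j ∈ Finset.univ, (if σ j then (1:ℝ) else 0) := by
        apply Finset.sum_le_sum_of_subset_of_nonneg (Finset.subset_univ T)
        intro j _ _; positivity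
    _ = ((Finset.univ.filter fun j => σ j = true).card : ℝ) := by
        rw [Finset.sum_boole]

/-- Impossibility of EF1 for all equilibria: for `n ≥ 2` agents with equal
entitlements and a set `M` of `2n` goods, in the interdependent instance where
`S₁ = {0,1}^M`, the other signal sets are singletons, and
`v_i(s,T) = Σ_{j∈T} s_{1,j}` for every agent `i`, there is no choice of bid sets
`B₁,…,Bₙ` and allocation mechanism `𝓜` such that (i) every true signal admits a
pure Nash equilibrium, and (ii) every pure Nash equilibrium induces an allocation
that is EF1 for every agent with respect to the true signal. -/
theorem no_all_PNE_EF1_mechanism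
    {M : Type*} [Fintype M] [DecidableEq M] (n : ℕ) (hn : 2 ≤ n)
    (hcard : Fintype.card M = 2 * n) :
    ¬ ∃ (B : Fin n → Type) (𝓜 : (M → Bool) → (∀ i, B i) → (M → Fin n)),
        (∀ s1 : M → Bool, ∃ (r1 : M → Bool) (b : ∀ i, B i),
          IsPNE B 𝓜 ⟨0, by omega⟩ s1 r1 b) ∧
        (∀ (s1 r1 : M → Bool) (b : ∀ i, B i),
          IsPNE B 𝓜 ⟨0, by omega⟩ s1 r1 b →
            -- the induced allocation is EF1 for every agent w.r.t. the true signal `s1`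
            ∀ i i' : Fin n,
              bundle (𝓜 r1 b) i' = ∅ ∨
              ∃ j ∈ bundle (𝓜 r1 b) i',
                sval s1 (bundle (𝓜 r1 b) i' \ {j}) ≤
                  sval s1 (bundle (𝓜 r1 b) i)) := by
  rintro ⟨B, 𝓜, hE, hEF⟩
  set i0 : Fin n := ⟨0, by omega⟩ with hi0def
  obtain ⟨r1, b, hPNE⟩ := hE (fun _ => true)
  set A : M → Fin n := 𝓜 r1 b with hAdef
  -- the total number of goods is the sum of bundle sizes
  have hsum : ∑ i : Fin n, (bundle A i).card = 2 * n := by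
    rw [← hcard, ← Finset.card_univ]
    exact (Finset.card_eq_sum_card_fiberwise (f := A) (t := Finset.univ)
      (fun x _ => Finset.mem_univ _)).symm ▸ rfl
  -- EF1 at all-ones signal: every bundle has card ≤ card of bundle i0 + 1
  have hEF1 := hEF (fun _ => true) r1 b hPNE
  have hsize : ∀ i : Fin n, (bundle A i).card ≤ (bundle A i0).card + 1 := by
    intro i
    rcases hEF1 i0 i with h | ⟨j, hj, hle⟩
    · rw [h]; simp
    · rw [sval_all_true _ _ (fun _ _ => rfl), sval_all_true _ _ (fun _ _ => rfl)] at hle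
      have hle' : (bundle A i \ {j}).card ≤ (bundle A i0).card := by exact_mod_cast hle
      have hcd : (bundle A i \ {j}).card = (bundle A i).card - 1 := by
        rw [Finset.card_sdiff_of_subset (by simpa using hj)]; simp
      have hjpos : 0 < (bundle A i).card := Finset.card_pos.mpr ⟨j, hj⟩
      omega
  -- hence agent i0's bundle has at least 2 goods
  have hc0 : 2 ≤ (bundle A i0).card := by
    by_contra hlt
    push_neg at hlt
    have h1 : ∀ i : Fin n, (bundle A i).card ≤ 2 := fun i => by
      have := hsize i; omega
    have hsum_le : ∑ i : Fin n, (bundle A i).card ≤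
        (bundle A i0).card + (Finset.univ.erase i0).card * 2 := by
      rw [← Finset.add_sum_erase _ _ (Finset.mem_univ i0)]
      have : ∑ i ∈ Finset.univ.erase i0, (bundle A i).card ≤
          ∑ _i ∈ Finset.univ.erase i0, 2 :=
        Finset.sum_le_sum (fun i _ => h1 i)
      simpa using this
    have hcerase : (Finset.univ.erase i0).card = n - 1 := by
      rw [Finset.card_erase_of_mem (Finset.mem_univ i0), Finset.card_univ, Fintype.card_fin]
    rw [hsum, hcerase] at hsum_le
    omega
  -- the new true signal: indicator of agent i0's bundle under A
  set s1' : M → Bool := fun j => decide (A j = i0) with hs1'def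
  have hfilter : (Finset.univ.filter fun j => s1' j = true) = bundle A i0 := by
    apply Finset.filter_congr
    intro j _
    simp [hs1'def]
  -- (r1, b) is still a PNE for s1'
  have hPNE' : IsPNE B 𝓜 i0 s1' r1 b := by
    constructor
    · intro r1' b1'
      calc sval s1' (bundle (𝓜 r1' (Function.update b i0 b1')) i0)
          ≤ ((Finset.univ.filter fun j => s1' j = true).card : ℝ) :=
            sval_le_card_filter _ _
        _ = ((bundle A i0).card : ℝ) := by rw [hfilter]
        _ = sval s1' (bundle A i0) := by
            rw [sval_all_true]
            intro j hj
            simp only [bundle, Finset.mem_filter] at hj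
            simp [hs1'def, hj.2]
    · exact hPNE.2
  -- EF1 fails for agent ⟨1,_⟩ against agent i0 w.r.t. s1'
  rcases hEF s1' r1 b hPNE' ⟨1, by omega⟩ i0 with h | ⟨j, hj, hle⟩
  · have : (bundle A i0).card = 0 := by rw [h]; simp
    omega
  · replace hle : sval s1' (bundle A i0 \ {j}) ≤ sval s1' (bundle A ⟨1, by omega⟩) := hle
    have hL : sval s1' (bundle A i0 \ {j}) = ((bundle A i0 \ {j}).card : ℝ) := by
      apply sval_all_true
      intro k hk
      have hk' := (Finset.mem_sdiff.mp hk).1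
      simp only [bundle, Finset.mem_filter] at hk'
      simp [hs1'def, hk'.2]
    have hR : sval s1' (bundle A ⟨1, by omega⟩) = 0 := by
      apply sval_all_false
      intro k hk
      simp only [bundle, Finset.mem_filter] at hk
      have : A k ≠ i0 := by
        rw [hk.2]
        simp [hi0def, Fin.ext_iff]
      simp [hs1'def, this]
    rw [hL, hR] at hle
    have hcd : (bundle A i0 \ {j}).card = (bundle A i0).card - 1 := by
      rw [Finset.card_sdiff_of_subset (by simpa using hj)]; simp
    have : (1 : ℝ) ≤ ((bundle A i0 \ {j}).card : ℝ) := by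
      have : 1 ≤ (bundle A i0 \ {j}).card := by omega
      exact_mod_cast this
    linarith
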